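/- (Theorem 1, convergence of IMRank) Let V be a finite set of n nodes and σ : Finset V → ℝ a monotone and submodular set function such that for every ranking r of V the values M_r(v), v ∈ V, are pairwise distinct. Let F be the IMRank step, mapping a ranking r to the ranking F(r) that orders V in decreasing order of M_r. Then, starting from any initial ranking r⁰ of V, there exists a finite t such that F^[t](r⁰) is a fixed point of F, and this fixed point is a self-consistent ranking. -/
import Mathlib


open Finset

variable {V : Type*} [Fintype V] [DecidableEq V]

/-- The set of top-`k` nodes of ranking `r` (positions `1,…,k`, i.e. indices `< k`). -/
def topk {n : ℕ} (r : Fin n ≃ V) (k : ℕ) : Finset V :=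
  (Finset.univ.filter fun i : Fin n => (i : ℕ) < k).image r

/-- Ranking-based marginal influence spread `M_r(v) = σ(T_r(i)) − σ(T_r(i−1))`
where `i` is the (1-based) position of `v` in `r`. -/
noncomputable def margM {n : ℕ} (σ : Finset V → ℝ) (r : Fin n ≃ V) (v : V) : ℝ :=
  σ (topk r ((r.symm v : ℕ) + 1)) - σ (topk r (r.symm v))

/-- Influence spread of the top-`k` nodes: `I_r(k) = Σ_{i=1}^k M_r(v_{r_i})`. -/
noncomputable def inflI {n : ℕ} (σ : Finset V → ℝ) (r : Fin n ≃ V) (k : ℕ) : ℝ :=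
  ∑ i ∈ Finset.univ.filter (fun i : Fin n => (i : ℕ) < k), margM σ r (r i)

set_option linter.unusedSectionVars false

section aux
variable {n : ℕ} (σ : Finset V → ℝ) (r : Fin n ≃ V)

lemma mem_topk {v : V} {k : ℕ} : v ∈ topk r k ↔ (r.symm v : ℕ) < k := by
  constructor
  · rintro h
    simp only [topk, mem_image, mem_filter] at h
    obtain ⟨i, ⟨_, hi⟩, rfl⟩ := h
    simpa using hi
  · intro h
    simp only [topk, mem_image, mem_filter]
    exact ⟨r.symm v, ⟨mem_univ _, h⟩, r.apply_symm_apply v⟩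

lemma topk_succ (i : Fin n) : topk r ((i : ℕ) + 1) = insert (r i) (topk r (i : ℕ)) := by
  ext v
  simp only [mem_topk, mem_insert]
  constructor
  · intro h
    rcases Nat.lt_succ_iff_lt_or_eq.mp h with h | h
    · exact Or.inr h
    · exact Or.inl (by rw [← r.apply_symm_apply v, Fin.ext h])
  · rintro (rfl | h)
    · simp
    · exact Nat.lt_succ_of_lt h

lemma not_mem_topk (i : Fin n) : r i ∉ topk r (i : ℕ) := by
  simp [mem_topk]

lemma margM_apply (i : Fin n) :
    margM σ r (r i) = σ (topk r ((i : ℕ) + 1)) - σ (topk r (i : ℕ)) := by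
  simp [margM]

lemma filter_eq_image {k : ℕ} (hkn : k ≤ n) :
    (Finset.univ.filter fun i : Fin n => (i : ℕ) < k)
      = Finset.univ.image (Fin.castLE hkn) := by
  ext i
  simp only [mem_filter, mem_univ, true_and, mem_image]
  constructor
  · intro h
    refine ⟨⟨(i : ℕ), h⟩, ?_⟩
    ext; simp
  · rintro ⟨j, rfl⟩
    simpa using j.2

lemma card_filter_lt {k : ℕ} (hkn : k ≤ n) :
    (Finset.univ.filter fun i : Fin n => (i : ℕ) < k).card = k := by
  rw [filter_eq_image hkn, Finset.card_image_of_injective _ (Fin.castLE_injective hkn)]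
  simp

lemma telescope : ∀ k, k ≤ n → σ (topk r k) = σ ∅ +
    ∑ i ∈ Finset.univ.filter (fun i : Fin n => (i : ℕ) < k), margM σ r (r i) := by
  intro k
  induction k with
  | zero =>
    intro _
    have : topk r 0 = ∅ := by simp [topk, filter_false_of_mem]
    simp [this]
  | succ k ih =>
    intro hk
    have hkn : k < n := hk
    set i : Fin n := ⟨k, hkn⟩ with hi
    have hins : (Finset.univ.filter fun j : Fin n => (j : ℕ) < k + 1)
        = insert i (Finset.univ.filter fun j : Fin n => (j : ℕ) < k) := by
      ext j
      simp only [mem_filter, mem_univ, true_and, mem_insert]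
      rw [Nat.lt_succ_iff_lt_or_eq]
      constructor
      · rintro (h | h)
        · exact Or.inr h
        · exact Or.inl (Fin.ext h)
      · rintro (rfl | h)
        · right; rfl
        · exact Or.inl h
    have hnotin : i ∉ Finset.univ.filter fun j : Fin n => (j : ℕ) < k := by simp [hi]
    rw [hins, Finset.sum_insert hnotin]
    have := margM_apply σ r i
    have hik : (i : ℕ) = k := rfl
    rw [hik] at this
    rw [ih (le_of_lt hkn)] at this
    linarith

lemma sum_topk_eq (g : V → ℝ) (k : ℕ) :
    ∑ v ∈ topk r k, g v
      = ∑ i ∈ Finset.univ.filter (fun i : Fin n => (i : ℕ) < k), g (r i) := by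
  rw [topk, Finset.sum_image (fun a _ b _ h => r.injective h)]

lemma sumM_le (hsub : ∀ S T : Finset V, S ⊆ T → ∀ v ∉ T,
      σ (insert v T) - σ T ≤ σ (insert v S) - σ S) :
    ∀ S : Finset V, σ ∅ + ∑ v ∈ S, margM σ r v ≤ σ S := by
  intro S
  induction S using Finset.strongInduction with
  | _ S ih =>
    rcases S.eq_empty_or_nonempty with rfl | hS
    · simp
    · obtain ⟨u, huS, hmax⟩ := S.exists_max_image (fun v => (r.symm v : ℕ)) hS
      have hsubset : S.erase u ⊆ topk r (r.symm u) := by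
        intro v hv
        rw [mem_topk]
        have hne : v ≠ u := Finset.ne_of_mem_erase hv
        have hle := hmax v (Finset.mem_of_mem_erase hv)
        exact lt_of_le_of_ne hle (fun h => hne (r.symm.injective (Fin.ext h)))
      have hnot : u ∉ topk r (r.symm u) := by simp [mem_topk]
      have hkey := hsub (S.erase u) (topk r (r.symm u)) hsubset u hnot
      have hins : insert u (topk r ((r.symm u : ℕ))) = topk r ((r.symm u : ℕ) + 1) := by
        rw [topk_succ r (r.symm u), r.apply_symm_apply]
      rw [hins, Finset.insert_erase huS] at hkey
      have hmarg : margM σ r u ≤ σ S - σ (S.erase u) := hkey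
      have hih := ih (S.erase u) (Finset.erase_ssubset huS)
      have hsum : ∑ v ∈ S, margM σ r v = margM σ r u + ∑ v ∈ S.erase u, margM σ r v :=
        (Finset.add_sum_erase S _ huS).symm
      rw [hsum]
      linarith

lemma lt_apply_of_strictMono {k : ℕ} (e : Fin k → Fin n) (he : StrictMono e) :
    ∀ m : ℕ, ∀ h : m < k, m ≤ (e ⟨m, h⟩ : ℕ) := by
  intro m
  induction m with
  | zero => intro h; exact Nat.zero_le _
  | succ m ihm =>
    intro h
    have hm : m < k := Nat.lt_of_succ_lt h
    have h1 := ihm hm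
    have h2 : e ⟨m, hm⟩ < e ⟨m + 1, h⟩ := he (by simp [Fin.lt_def])
    have h3 : (e ⟨m, hm⟩ : ℕ) < (e ⟨m + 1, h⟩ : ℕ) := h2
    omega

lemma sum_le_initial (f : Fin n → ℝ) (hf : ∀ i j : Fin n, i ≤ j → f j ≤ f i)
    (A : Finset (Fin n)) :
    ∑ i ∈ A, f i ≤ ∑ i ∈ Finset.univ.filter (fun i : Fin n => (i : ℕ) < A.card), f i := by
  have hkn : A.card ≤ n := by
    simpa using Finset.card_le_card (Finset.subset_univ A)
  set k := A.card with hk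
  set e := A.orderEmbOfFin rfl with he
  have hA : A = Finset.univ.image e := by
    ext i
    simp only [Finset.mem_image, Finset.mem_univ, true_and]
    constructor
    · intro hi
      have : i ∈ Set.range e := by rw [Finset.range_orderEmbOfFin]; exact hi
      obtain ⟨j, hj⟩ := this
      exact ⟨j, hj⟩
    · rintro ⟨j, rfl⟩
      exact Finset.orderEmbOfFin_mem A rfl j
  rw [hA, Finset.sum_image (fun a _ b _ h => e.injective h),
    filter_eq_image hkn, Finset.sum_image (fun a _ b _ h => Fin.castLE_injective hkn h)]
  apply Finset.sum_le_sum
  intro j _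
  apply hf
  rw [Fin.le_def]
  simpa using lt_apply_of_strictMono (e : Fin k → Fin n) e.strictMono (j : ℕ) j.2

lemma filter_lt_succ {k : ℕ} (hkn : k < n) :
    (Finset.univ.filter fun j : Fin n => (j : ℕ) < k + 1)
      = insert (⟨k, hkn⟩ : Fin n) (Finset.univ.filter fun j : Fin n => (j : ℕ) < k) := by
  ext j
  simp only [mem_filter, mem_univ, true_and, mem_insert]
  rw [Nat.lt_succ_iff_lt_or_eq]
  constructor
  · rintro (h | h)
    · exact Or.inr h
    · exact Or.inl (Fin.ext h)
  · rintro (rfl | h)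
    · right; rfl
    · exact Or.inl h

lemma key_chain (hsub : ∀ S T : Finset V, S ⊆ T → ∀ v ∉ T,
      σ (insert v T) - σ T ≤ σ (insert v S) - σ S)
    (r' : Fin n ≃ V)
    (hsort : ∀ i j : Fin n, i ≤ j → margM σ r (r' j) ≤ margM σ r (r' i))
    {k : ℕ} (hkn : k ≤ n) :
    σ (topk r k) - σ ∅ ≤
        ∑ i ∈ Finset.univ.filter (fun i : Fin n => (i : ℕ) < k), margM σ r (r' i)
      ∧ ∑ i ∈ Finset.univ.filter (fun i : Fin n => (i : ℕ) < k), margM σ r (r' i)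
          ≤ σ (topk r' k) - σ ∅ := by
  constructor
  · set A := (topk r k).image r'.symm with hA
    have hAcard : A.card = k := by
      rw [hA, Finset.card_image_of_injective _ r'.symm.injective, topk,
        Finset.card_image_of_injective _ r.injective, card_filter_lt hkn]
    have hAsum : ∑ i ∈ A, margM σ r (r' i) = ∑ v ∈ topk r k, margM σ r v := by
      rw [hA, Finset.sum_image (fun a _ b _ h => r'.symm.injective h)]
      exact Finset.sum_congr rfl fun v _ => by rw [r'.apply_symm_apply]
    have hdom := sum_le_initial (fun i => margM σ r (r' i)) hsort A
    rw [hAcard, hAsum] at hdom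
    have htel := telescope σ r k hkn
    rw [sum_topk_eq r (margM σ r) k] at hdom
    have : ∑ i ∈ Finset.univ.filter (fun i : Fin n => (i : ℕ) < k), margM σ r (r i)
        = σ (topk r k) - σ ∅ := by linarith
    linarith
  · have := sumM_le σ r hsub (topk r' k)
    rw [sum_topk_eq r' (margM σ r) k] at this
    linarith

lemma step_le (hsub : ∀ S T : Finset V, S ⊆ T → ∀ v ∉ T,
      σ (insert v T) - σ T ≤ σ (insert v S) - σ S)
    (r' : Fin n ≃ V)
    (hsort : ∀ i j : Fin n, i ≤ j → margM σ r (r' j) ≤ margM σ r (r' i))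
    {k : ℕ} (hkn : k ≤ n) : σ (topk r k) ≤ σ (topk r' k) := by
  obtain ⟨h1, h2⟩ := key_chain σ r hsub r' hsort hkn
  linarith

lemma eq_of_all_eq (hsub : ∀ S T : Finset V, S ⊆ T → ∀ v ∉ T,
      σ (insert v T) - σ T ≤ σ (insert v S) - σ S)
    (hdist : Function.Injective (margM σ r))
    (r' : Fin n ≃ V)
    (hsort : ∀ i j : Fin n, i ≤ j → margM σ r (r' j) ≤ margM σ r (r' i))
    (heq : ∀ k ≤ n, σ (topk r' k) = σ (topk r k)) : r' = r := by
  have hsums : ∀ k ≤ n,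
      ∑ i ∈ Finset.univ.filter (fun i : Fin n => (i : ℕ) < k), margM σ r (r' i)
        = ∑ i ∈ Finset.univ.filter (fun i : Fin n => (i : ℕ) < k), margM σ r (r i) := by
    intro k hkn
    obtain ⟨h1, h2⟩ := key_chain σ r hsub r' hsort hkn
    have htel := telescope σ r k hkn
    rw [heq k hkn] at h2
    linarith
  have hpt : ∀ i : Fin n, margM σ r (r' i) = margM σ r (r i) := by
    intro i
    have h1 := hsums (i : ℕ) (le_of_lt i.2)
    have h2 := hsums ((i : ℕ) + 1) i.2
    rw [filter_lt_succ i.2, Finset.sum_insert (by simp), Finset.sum_insert (by simp)] at h2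
    have hi : (⟨(i : ℕ), i.2⟩ : Fin n) = i := rfl
    rw [hi] at h2
    linarith
  exact Equiv.ext fun i => hdist (hpt i)

end aux

/-- Theorem 1, convergence of IMRank: with `σ` monotone and submodular and
`M_r` pairwise distinct for every ranking `r`, the IMRank step `F` (sorting in decreasing
order of `M_r`) reaches, from any initial ranking, a fixed point after finitely many
iterations, and this fixed point is a self-consistent ranking. -/
theorem imrank_converges {n : ℕ} (σ : Finset V → ℝ)
    (hmono : ∀ S T : Finset V, S ⊆ T → σ S ≤ σ T)
    (hsub : ∀ S T : Finset V, S ⊆ T → ∀ v ∉ T,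
      σ (insert v T) - σ T ≤ σ (insert v S) - σ S)
    (hdist : ∀ r : Fin n ≃ V, Function.Injective (margM σ r))
    (F : (Fin n ≃ V) → (Fin n ≃ V))
    (hF : ∀ (r : Fin n ≃ V) (i j : Fin n), i ≤ j → margM σ r (F r j) ≤ margM σ r (F r i)) :
    ∀ r0 : Fin n ≃ V, ∃ t : ℕ,
      F (F^[t] r0) = F^[t] r0 ∧
      (∀ i j : Fin n, i ≤ j →
        margM σ (F^[t] r0) ((F^[t] r0) j) ≤ margM σ (F^[t] r0) ((F^[t] r0) i)) := by
  intro r0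
  set Φ : (Fin n ≃ V) → ℝ := fun r => ∑ k ∈ Finset.range (n + 1), σ (topk r k) with hΦ
  have hstep : ∀ r : Fin n ≃ V, F r ≠ r → Φ r < Φ (F r) := by
    intro r hne
    have hle : ∀ k ∈ Finset.range (n + 1), σ (topk r k) ≤ σ (topk (F r) k) := fun k hk =>
      step_le σ r hsub (F r) (hF r) (Nat.lt_succ_iff.mp (Finset.mem_range.mp hk))
    have hstrict : ∃ k ∈ Finset.range (n + 1), σ (topk r k) < σ (topk (F r) k) := by
      by_contra hno
      push_neg at hno
      apply hne
      apply eq_of_all_eq σ r hsub (hdist r) (F r) (hF r)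
      intro k hkn
      have h1 := hle k (Finset.mem_range.mpr (Nat.lt_succ_of_le hkn))
      have h2 := hno k (Finset.mem_range.mpr (Nat.lt_succ_of_le hkn))
      linarith
    exact Finset.sum_lt_sum hle hstrict
  have key : ∃ t : ℕ, F (F^[t] r0) = F^[t] r0 := by
    by_contra hno
    push_neg at hno
    have hmono' : StrictMono fun t : ℕ => Φ (F^[t] r0) := by
      apply strictMono_nat_of_lt_succ
      intro t
      have := hstep (F^[t] r0) (hno t)
      rwa [← Function.iterate_succ_apply' F t r0] at this
    obtain ⟨a, b, hab, heq⟩ :=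
      Finite.exists_ne_map_eq_of_infinite (fun t : ℕ => F^[t] r0)
    exact hab (hmono'.injective (by simp only [heq]))
  obtain ⟨t, ht⟩ := key
  refine ⟨t, ht, fun i j hij => ?_⟩
  have := hF (F^[t] r0) i j hij
  rwa [ht] at this
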